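/- For all integers n ≥ 0, p_{-2}(5n+3) ≡ 0 (mod 5). -/

import Mathlib

/-- The number of `k`-colored partitions of `n`: a `k`-colored partition is a
`k`-tuple of ordinary partitions whose sizes sum to `n`. -/
def coloredPartitions (k n : ℕ) : ℕ :=
  ∑ c ∈ Finset.Nat.antidiagonalTuple k n, ∏ i, Fintype.card (Nat.Partition (c i))

/-!
Let `E = ∏ (1 - X ^ n)` (Mathlib's `pentagonalSeries`, by the pentagonal number theorem) and
`P = 1 / E` the partition generating function, so that `coloredPartitions 2 m` is the coefficient
of `X ^ m` in `P ^ 2 = P ^ 5 * E ^ 3`. Over `ZMod 5` the Frobenius makes `P ^ 5` a series in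
`X ^ 5`, so the coefficients of `P ^ 2` in degrees `≡ 3 (mod 5)` only see those of `E ^ 3`.
By Jacobi's identity `E ^ 3 = ∑ (-1) ^ k (2k + 1) X ^ (k(k+1)/2)`, and `k(k+1)/2 ≡ 3 (mod 5)`
forces `(2k + 1) ^ 2 = 4k(k+1) + 1 ≡ 0`, so these coefficients vanish.

Jacobi's identity is the limit of the finite identity
`(X; X)_n ^ 2 = ∑_{k ≤ n} (-1) ^ k (2k + 1) X ^ (k(k+1)/2) [2n+1, n+1+k]_X`,
proved by induction on `n` from the two `q`-Pascal rules, since the Gaussian binomial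
`[i + j, i]_X` agrees with `P` up to degree `min i j`.
-/

open PowerSeries Finset Filter
open scoped PowerSeries.WithPiTopology

theorem Nat.choose_two_add_two (m : ℕ) : (m + 1 + 1).choose 2 = (m + 1).choose 2 + (m + 1) := by
  rw [Nat.choose_succ_succ', Nat.choose_one_right, add_comm]

theorem Nat.le_choose_two_succ : ∀ k : ℕ, k ≤ (k + 1).choose 2
  | 0 => le_rfl
  | k + 1 => by rw [Nat.choose_two_add_two]; omega

theorem Nat.sq_two_mul_add_one (k : ℕ) : (2 * k + 1) ^ 2 = 8 * (k + 1).choose 2 + 1 := by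
  induction k with
  | zero => rfl
  | succ k ih => rw [Nat.choose_two_add_two]; nlinarith [ih]

namespace PowerSeries

variable {R : Type*} [CommRing R]

theorem smodEq_X_pow_iff {f g : R⟦X⟧} {n : ℕ} :
    f ≡ g [SMOD Ideal.span {X ^ n}] ↔ ∀ d < n, coeff d f = coeff d g := by
  simp only [SModEq.sub_mem, Ideal.mem_span_singleton, X_pow_dvd_iff, map_sub, sub_eq_zero]

theorem X_pow_smodEq_zero {m n : ℕ} (h : n ≤ m) :
    (X : R⟦X⟧) ^ m ≡ 0 [SMOD Ideal.span {X ^ n}] :=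
  SModEq.zero.2 (Ideal.mem_span_singleton.2 (pow_dvd_pow X h))

variable (R) in
noncomputable def qPochhammer (n : ℕ) : R⟦X⟧ := ∏ i ∈ range n, (1 - X ^ (i + 1))

@[simp] theorem qPochhammer_zero : qPochhammer R 0 = 1 := prod_range_zero _

theorem qPochhammer_succ (n : ℕ) :
    qPochhammer R (n + 1) = qPochhammer R n * (1 - X ^ (n + 1)) :=
  prod_range_succ _ _

theorem isUnit_qPochhammer (n : ℕ) : IsUnit (qPochhammer R n) := by
  simp [isUnit_iff_constantCoeff, qPochhammer]

theorem qPochhammer_smodEq_of_le {N m : ℕ} (h : N ≤ m) :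
    qPochhammer R m ≡ qPochhammer R N [SMOD Ideal.span {X ^ (N + 1)}] := by
  rw [qPochhammer, qPochhammer, ← prod_range_mul_prod_Ico _ h]
  have htail : ∏ i ∈ Ico N m, (1 - X ^ (i + 1) : R⟦X⟧) ≡ ∏ i ∈ Ico N m, 1
      [SMOD Ideal.span {X ^ (N + 1)}] := SModEq.prod fun i hi ↦ by
    simpa using SModEq.sub SModEq.rfl (X_pow_smodEq_zero (R := R) (by simp at hi; omega))
  simpa using SModEq.mul (SModEq.refl (∏ i ∈ range N, (1 - X ^ (i + 1) : R⟦X⟧))) htail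

theorem qPochhammer_smodEq_pentagonalSeries {N m : ℕ} (h : N ≤ m) :
    qPochhammer R m ≡ pentagonalSeries R [SMOD Ideal.span {X ^ (N + 1)}] := by
  refine (qPochhammer_smodEq_of_le h).trans (smodEq_X_pow_iff.2 fun d hd ↦ ?_)
  obtain ⟨M, hM, hNM⟩ := ((tendsto_finset_range.eventually
    (coeff_prod_one_sub_X_pow_eventually_eq R d)).and (eventually_ge_atTop N)).exists
  rw [← hM]
  exact (smodEq_X_pow_iff.1 (qPochhammer_smodEq_of_le hNM) d hd).symm

variable (R) in
noncomputable def qBinomial : ℕ → ℕ → R⟦X⟧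
  | _, 0 => 1
  | 0, _ + 1 => 0
  | n + 1, k + 1 => qBinomial n k + X ^ (k + 1) * qBinomial n (k + 1)

@[simp] theorem qBinomial_zero_right (n : ℕ) : qBinomial R n 0 = 1 := by
  cases n <;> rfl

theorem qBinomial_succ_succ (n k : ℕ) :
    qBinomial R (n + 1) (k + 1) = qBinomial R n k + X ^ (k + 1) * qBinomial R n (k + 1) :=
  rfl

theorem qBinomial_eq_zero_of_lt : ∀ {n k : ℕ}, n < k → qBinomial R n k = 0
  | 0, _ + 1, _ => rfl
  | n + 1, k + 1, h => by
    rw [qBinomial_succ_succ, qBinomial_eq_zero_of_lt (by omega),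
      qBinomial_eq_zero_of_lt (by omega), mul_zero, add_zero]

@[simp] theorem qBinomial_self : ∀ n : ℕ, qBinomial R n n = 1
  | 0 => rfl
  | n + 1 => by
    rw [qBinomial_succ_succ, qBinomial_self n, qBinomial_eq_zero_of_lt n.lt_succ_self,
      mul_zero, add_zero]

theorem qBinomial_mul_qPochhammer_mul_qPochhammer : ∀ i j : ℕ,
    qBinomial R (i + j) i * qPochhammer R i * qPochhammer R j = qPochhammer R (i + j)
  | 0, j => by simp
  | i + 1, 0 => by simp
  | i + 1, j + 1 => by
    have h₁ := qBinomial_mul_qPochhammer_mul_qPochhammer i (j + 1)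
    have h₂ := qBinomial_mul_qPochhammer_mul_qPochhammer (i + 1) j
    rw [show i + (j + 1) = i + j + 1 by omega, qPochhammer_succ j] at h₁
    rw [show i + 1 + j = i + j + 1 by omega, qPochhammer_succ i] at h₂
    rw [show i + 1 + (j + 1) = i + j + 1 + 1 by omega, qBinomial_succ_succ,
      qPochhammer_succ i, qPochhammer_succ j, qPochhammer_succ (i + j + 1)]
    linear_combination (1 - X ^ (i + 1) : R⟦X⟧) * h₁ + X ^ (i + 1) * (1 - X ^ (j + 1)) * h₂

theorem qBinomial_symm_of_eq_add {n i j : ℕ} (h : n = i + j) :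
    qBinomial R n i = qBinomial R n j := by
  subst h
  refine ((isUnit_qPochhammer i).mul (isUnit_qPochhammer j)).mul_right_cancel ?_
  have h₁ := qBinomial_mul_qPochhammer_mul_qPochhammer (R := R) i j
  have h₂ := qBinomial_mul_qPochhammer_mul_qPochhammer (R := R) j i
  rw [add_comm j i] at h₂
  linear_combination h₁ - h₂

theorem qBinomial_succ_succ' (n k : ℕ) :
    qBinomial R (n + 1) (k + 1) = X ^ (n - k) * qBinomial R n k + qBinomial R n (k + 1) := by
  rcases lt_or_ge n k with h | h
  · rw [qBinomial_eq_zero_of_lt (by omega), qBinomial_eq_zero_of_lt h,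
      qBinomial_eq_zero_of_lt (by omega), mul_zero, add_zero]
  obtain ⟨_ | j, rfl⟩ := Nat.exists_eq_add_of_le h
  · simp [qBinomial_eq_zero_of_lt]
  rw [qBinomial_symm_of_eq_add (show k + (j + 1) + 1 = k + 1 + (j + 1) by omega),
    qBinomial_succ_succ, qBinomial_symm_of_eq_add (show k + (j + 1) = k + 1 + j by omega),
    qBinomial_symm_of_eq_add (n := k + (j + 1)) (i := k) rfl, Nat.add_sub_cancel_left]
  ring

theorem qBinomial_two_mul_add_three (n k : ℕ) (hk : k ≤ n + 1) :
    qBinomial R (2 * n + 3) (n + 2 + k) =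
      (1 + X ^ (2 * n + 2)) * qBinomial R (2 * n + 1) (n + 1 + k) +
        X ^ (n + 1 - k) * qBinomial R (2 * n + 1) (n + k) +
          X ^ (n + 2 + k) * qBinomial R (2 * n + 1) (n + 2 + k) := by
  have h₁ := qBinomial_succ_succ' (R := R) (2 * n + 2) (n + 1 + k)
  have h₂ := qBinomial_succ_succ (R := R) (2 * n + 1) (n + 1 + k)
  have h₃ := qBinomial_succ_succ (R := R) (2 * n + 1) (n + k)
  rw [show 2 * n + 2 + 1 = 2 * n + 3 by omega, show n + 1 + k + 1 = n + 2 + k by omega,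
    show 2 * n + 2 - (n + 1 + k) = n + 1 - k by omega] at h₁
  rw [show 2 * n + 1 + 1 = 2 * n + 2 by omega, show n + 1 + k + 1 = n + 2 + k by omega] at h₂
  rw [show 2 * n + 1 + 1 = 2 * n + 2 by omega, show n + k + 1 = n + 1 + k by omega] at h₃
  have hX : (X : R⟦X⟧) ^ (n + 1 - k) * X ^ (n + 1 + k) = X ^ (2 * n + 2) := by
    rw [← pow_add]; congr 1; omega
  linear_combination h₁ + h₂ + X ^ (n + 1 - k) * h₃ + qBinomial R (2 * n + 1) (n + 1 + k) * hX

-- At `k = 0` the truncated `k - 1 = 0` is matched by `[2n+1, n]_X = [2n+1, n+1]_X`.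
theorem X_pow_mul_qBinomial_two_mul_add_three (n k : ℕ) (hk : k ≤ n + 1) :
    X ^ (k + 1).choose 2 * qBinomial R (2 * n + 3) (n + 2 + k) =
      (1 + X ^ (2 * n + 2)) * (X ^ (k + 1).choose 2 * qBinomial R (2 * n + 1) (n + 1 + k)) +
        X ^ (n + 1) * (X ^ (k - 1 + 1).choose 2 * qBinomial R (2 * n + 1) (n + 1 + (k - 1)) +
          X ^ (k + 1 + 1).choose 2 * qBinomial R (2 * n + 1) (n + 1 + (k + 1))) := by
  rw [qBinomial_two_mul_add_three n k hk]
  rcases k with _ | m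
  · simp only [zero_add, add_zero, Nat.sub_zero, Nat.zero_sub, Nat.choose_succ_self,
      Nat.choose_self, pow_zero, pow_one, one_mul]
    rw [qBinomial_symm_of_eq_add (show 2 * n + 1 = n + (n + 1) by omega)]
    ring
  have hT₁ := Nat.choose_two_add_two m
  have hT₂ := Nat.choose_two_add_two (m + 1)
  have hX₁ : (X : R⟦X⟧) ^ (m + 1 + 1).choose 2 * X ^ (n + 1 - (m + 1)) =
      X ^ (n + 1) * X ^ (m + 1).choose 2 := by
    rw [← pow_add, ← pow_add]; congr 1; omega
  have hX₂ : (X : R⟦X⟧) ^ (m + 1 + 1).choose 2 * X ^ (n + 2 + (m + 1)) =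
      X ^ (n + 1) * X ^ (m + 1 + 1 + 1).choose 2 := by
    rw [← pow_add, ← pow_add]; congr 1; omega
  simp only [Nat.add_sub_cancel, show n + (m + 1) = n + 1 + m by omega,
    show n + 2 + (m + 1) = n + 1 + (m + 1 + 1) by omega]
  linear_combination qBinomial R (2 * n + 1) (n + 1 + m) * hX₁ +
    qBinomial R (2 * n + 1) (n + 1 + (m + 1 + 1)) * hX₂

-- `c k = (-1) ^ k * (2 * k + 1)` satisfies `c (k - 1) + 2 * c k + c (k + 1) = 0`, also at `k = 0`
-- where `y (0 - 1) = y 0`; so only the boundary terms survive.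
theorem sum_neg_one_pow_mul_odd_telescope {A : Type*} [CommRing A] (y : ℕ → A) (M : ℕ) :
    ∑ k ∈ range (M + 1), (-1) ^ k * (2 * k + 1) * (y (k - 1) + y (k + 1)) +
        2 * ∑ k ∈ range (M + 1), (-1) ^ k * (2 * k + 1) * y k =
      (-1) ^ M * ((2 * M + 1) * y (M + 1) + (2 * M + 3) * y M) := by
  induction M with
  | zero => simp; ring
  | succ M ih =>
    rw [sum_range_succ, sum_range_succ (n := M + 1), Nat.add_sub_cancel]
    push_cast
    linear_combination ih

theorem qPochhammer_sq_eq_sum (n : ℕ) :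
    qPochhammer R n ^ 2 = ∑ k ∈ range (n + 1),
      ((-1) ^ k * (2 * k + 1) : R⟦X⟧) * X ^ (k + 1).choose 2 *
        qBinomial R (2 * n + 1) (n + 1 + k) := by
  induction n with
  | zero => simp
  | succ n ih =>
    let y (k : ℕ) : R⟦X⟧ := X ^ (k + 1).choose 2 * qBinomial R (2 * n + 1) (n + 1 + k)
    have hy {k : ℕ} (hk : n + 1 ≤ k) : y k = 0 := by
      simp [y, qBinomial_eq_zero_of_lt (show 2 * n + 1 < n + 1 + k by omega)]
    have hterm : ∀ k ∈ range (n + 2), X ^ (k + 1).choose 2 *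
        qBinomial R (2 * (n + 1) + 1) (n + 1 + 1 + k) =
          (1 + X ^ (2 * n + 2)) * y k + X ^ (n + 1) * (y (k - 1) + y (k + 1)) := fun k hk ↦
      X_pow_mul_qBinomial_two_mul_add_three n k (by simp at hk; omega)
    have hS :
        ∑ k ∈ range (n + 2), ((-1) ^ k * (2 * k + 1) : R⟦X⟧) * y k = qPochhammer R n ^ 2 := by
      rw [sum_range_succ, hy le_rfl, mul_zero, add_zero, ih]
      simp only [y, mul_assoc]
    have hshift := sum_neg_one_pow_mul_odd_telescope y (n + 1)
    rw [hy le_rfl, hy (by omega), mul_zero, mul_zero, add_zero, mul_zero] at hshift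
    calc qPochhammer R (n + 1) ^ 2 = (1 - X ^ (n + 1)) ^ 2 * qPochhammer R n ^ 2 := by
          rw [qPochhammer_succ]; ring
      _ = (1 + X ^ (2 * n + 2)) *
              ∑ k ∈ range (n + 2), ((-1) ^ k * (2 * k + 1) : R⟦X⟧) * y k +
            X ^ (n + 1) * ∑ k ∈ range (n + 2),
              ((-1) ^ k * (2 * k + 1) : R⟦X⟧) * (y (k - 1) + y (k + 1)) := by
          linear_combination (-X ^ (n + 1) : R⟦X⟧) * hshift - (1 - X ^ (n + 1)) ^ 2 * hS
      _ = ∑ k ∈ range (n + 2), ((-1) ^ k * (2 * k + 1) : R⟦X⟧) *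
            ((1 + X ^ (2 * n + 2)) * y k + X ^ (n + 1) * (y (k - 1) + y (k + 1))) := by
          rw [mul_sum, mul_sum, ← sum_add_distrib]
          exact sum_congr rfl fun k _ ↦ by ring
      _ = _ := sum_congr rfl fun k hk ↦ by rw [mul_assoc _ (X ^ _), hterm k hk]


variable (R) in
noncomputable def partitionSeries : R⟦X⟧ := mk fun n ↦ (Fintype.card n.Partition : R)

theorem coloredPartitions_eq_coeff_pow (k n : ℕ) :
    (coloredPartitions k n : R) = coeff n (partitionSeries R ^ k) := by
  rw [← Fin.prod_const k (partitionSeries R), coeff_prod, coloredPartitions,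
    ← piAntidiag_univ_fin_eq_antidiagonalTuple, finsuppAntidiag, sum_map,
    ← sum_attach (piAntidiag univ n)]
  push_cast
  refine sum_congr rfl fun x _ ↦ prod_congr rfl fun i _ ↦ ?_
  simp [partitionSeries]

theorem pentagonalSeries_mul_partitionSeries :
    pentagonalSeries R * partitionSeries R = 1 := by
  let _ : TopologicalSpace R := ⊥
  have : DiscreteTopology R := ⟨rfl⟩
  have hP := Nat.Partition.hasProd_powerSeriesMk_card_restricted R (fun _ ↦ True)
  have hprod := (WithPiTopology.hasProd_one_sub_X_pow R).mul hP
  have hfactor (i : ℕ) : (1 - X ^ (i + 1) : R⟦X⟧) *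
      (if True then ∑' j : ℕ, X ^ ((i + 1) * j) else 1) = 1 := by
    simp_rw [if_true, pow_mul]
    exact WithPiTopology.one_sub_mul_tsum_pow_of_constantCoeff_eq_zero (by simp)
  simp only [hfactor] at hprod
  convert hprod.unique hasProd_one
  ext n
  simp [partitionSeries, Nat.Partition.restricted]

theorem qBinomial_smodEq_partitionSeries {N n k : ℕ} (hk : N ≤ k) (hnk : N + k ≤ n) :
    qBinomial R n k ≡ partitionSeries R [SMOD Ideal.span {X ^ (N + 1)}] := by
  obtain ⟨j, rfl⟩ := Nat.exists_eq_add_of_le (show k ≤ n by omega)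
  have hP := pentagonalSeries_mul_partitionSeries (R := R)
  have hE {m : ℕ} (hm : N ≤ m) := qPochhammer_smodEq_pentagonalSeries (R := R) hm
  calc qBinomial R (k + j) k
      = qBinomial R (k + j) k * (pentagonalSeries R * partitionSeries R) *
          (pentagonalSeries R * partitionSeries R) := by rw [hP, mul_one, mul_one]
    _ ≡ qBinomial R (k + j) k * (qPochhammer R k * partitionSeries R) *
          (qPochhammer R j * partitionSeries R) [SMOD Ideal.span {X ^ (N + 1)}] :=
      (SModEq.rfl.mul ((hE hk).symm.mul SModEq.rfl)).mul ((hE (by omega)).symm.mul SModEq.rfl)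
    _ = qPochhammer R (k + j) * partitionSeries R * partitionSeries R := by
      rw [← qBinomial_mul_qPochhammer_mul_qPochhammer]; ring
    _ ≡ pentagonalSeries R * partitionSeries R * partitionSeries R
          [SMOD Ideal.span {X ^ (N + 1)}] :=
      ((hE (by omega)).mul SModEq.rfl).mul SModEq.rfl
    _ = partitionSeries R := by rw [hP, one_mul]

theorem pentagonalSeries_pow_three_smodEq (N : ℕ) :
    pentagonalSeries R ^ 3 ≡ ∑ k ∈ range (N + 1), ((-1) ^ k * (2 * k + 1) : R⟦X⟧) *
      X ^ (k + 1).choose 2 [SMOD Ideal.span {X ^ (N + 1)}] := by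
  have hsq := qPochhammer_sq_eq_sum (R := R) (2 * N + 1)
  rw [show range (2 * N + 1 + 1) = range ((N + 1) + (N + 1)) by congr 1; omega,
    sum_range_add] at hsq
  have hlow : ∑ k ∈ range (N + 1), ((-1) ^ k * (2 * k + 1) : R⟦X⟧) * X ^ (k + 1).choose 2 *
      qBinomial R (2 * (2 * N + 1) + 1) (2 * N + 1 + 1 + k) ≡
        (∑ k ∈ range (N + 1), ((-1) ^ k * (2 * k + 1) : R⟦X⟧) * X ^ (k + 1).choose 2) *
          partitionSeries R [SMOD Ideal.span {X ^ (N + 1)}] := by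
    rw [sum_mul]
    exact SModEq.sum fun k hk ↦ SModEq.mul SModEq.rfl
      (qBinomial_smodEq_partitionSeries (by omega) (by simp at hk; omega))
  have hhigh :
      ∑ k ∈ range (N + 1), ((-1) ^ (N + 1 + k) * (2 * (N + 1 + k : ℕ) + 1) : R⟦X⟧) *
      X ^ (N + 1 + k + 1).choose 2 *
        qBinomial R (2 * (2 * N + 1) + 1) (2 * N + 1 + 1 + (N + 1 + k))
      ≡ 0 [SMOD Ideal.span {X ^ (N + 1)}] := by
    refine (SModEq.sum (y := fun _ ↦ (0 : R⟦X⟧)) fun k _ ↦ ?_).trans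
      (by rw [sum_const_zero])
    simpa using SModEq.mul (SModEq.mul SModEq.rfl (X_pow_smodEq_zero (R := R)
      ((show N + 1 ≤ N + 1 + k by omega).trans (Nat.le_choose_two_succ _)))) SModEq.rfl
  calc pentagonalSeries R ^ 3 = pentagonalSeries R * pentagonalSeries R ^ 2 := by ring
    _ ≡ pentagonalSeries R * qPochhammer R (2 * N + 1) ^ 2 [SMOD Ideal.span {X ^ (N + 1)}] := by
      exact SModEq.mul SModEq.rfl
        (SModEq.pow 2 (qPochhammer_smodEq_pentagonalSeries (by omega)).symm)
    _ ≡ pentagonalSeries R * ((∑ k ∈ range (N + 1), ((-1) ^ k * (2 * k + 1) : R⟦X⟧) *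
          X ^ (k + 1).choose 2) * partitionSeries R + 0) [SMOD Ideal.span {X ^ (N + 1)}] := by
      rw [hsq]; exact SModEq.mul SModEq.rfl (SModEq.add hlow hhigh)
    _ = _ := by
      rw [add_zero, mul_left_comm, pentagonalSeries_mul_partitionSeries, mul_one]

theorem coeff_pentagonalSeries_pow_three (d : ℕ) :
    coeff d (pentagonalSeries R ^ 3) =
      ∑ k ∈ range (d + 1) with (k + 1).choose 2 = d, ((-1) ^ k * (2 * k + 1) : R) := by
  rw [smodEq_X_pow_iff.1 (pentagonalSeries_pow_three_smodEq d) d d.lt_succ_self, map_sum,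
    sum_filter]
  refine sum_congr rfl fun k _ ↦ ?_
  rw [show ((-1) ^ k * (2 * k + 1) : R⟦X⟧) = C ((-1) ^ k * (2 * k + 1) : R) by
      simp only [map_mul, map_pow, map_neg, map_one, map_add, map_natCast, map_ofNat],
    coeff_C_mul_X_pow]
  exact if_congr eq_comm rfl rfl

theorem coeff_pow_eq_zero_of_not_dvd {S : Type*} [CommSemiring S] {p : ℕ} [ExpChar S p]
    (f : S⟦X⟧) {m : ℕ} (hm : ¬ p ∣ m) : coeff m (f ^ p) = 0 := by
  rw [← coeff_coe_trunc_of_lt m.lt_succ_self, ← trunc_trunc_pow,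
    coeff_coe_trunc_of_lt m.lt_succ_self, ← Polynomial.coe_pow, Polynomial.coeff_coe,
    ← Polynomial.map_frobenius_expand, Polynomial.coeff_map,
    Polynomial.coeff_expand (expChar_pos S p), if_neg hm, map_zero]

theorem coeff_mul_eq_zero_of_modEq {f g : R⟦X⟧} {m d : ℕ}
    (hf : ∀ i, ¬ m ∣ i → coeff i f = 0)
    (hg : ∀ j, j ≡ d [MOD m] → coeff j g = 0) : coeff d (f * g) = 0 := by
  rw [coeff_mul]
  refine sum_eq_zero fun ⟨i, j⟩ hij ↦ ?_
  rw [HasAntidiagonal.mem_antidiagonal] at hij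
  by_cases hi : m ∣ i
  · rw [hg j (by simpa [← hij] using ((Nat.modEq_zero_iff_dvd.2 hi).add_right j).symm), mul_zero]
  · rw [hf i hi, zero_mul]

theorem coeff_pentagonalSeries_pow_three_eq_zero {d : ℕ} (hd : d ≡ 3 [MOD 5]) :
    coeff d (pentagonalSeries (ZMod 5) ^ 3) = 0 := by
  rw [coeff_pentagonalSeries_pow_three]
  refine sum_eq_zero fun k hk ↦ ?_
  have hsq : ((2 * k + 1 : ℕ) : ZMod 5) ^ 2 = 0 := by
    rw [← Nat.cast_pow, Nat.sq_two_mul_add_one, (mem_filter.1 hk).2, ZMod.natCast_eq_zero_iff]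
    unfold Nat.ModEq at hd
    omega
  have : Fact (Nat.Prime 5) := ⟨Nat.prime_five⟩
  have h := pow_eq_zero_iff two_ne_zero |>.1 hsq
  push_cast at h
  rw [h, mul_zero]

end PowerSeries

theorem p2_5n3 (n : ℕ) :
    coloredPartitions (2) (5 * n + 3) ≡ 0 [MOD 5] := by
  rw [Nat.modEq_zero_iff_dvd, ← ZMod.natCast_eq_zero_iff, coloredPartitions_eq_coeff_pow]
  have hP := pentagonalSeries_mul_partitionSeries (R := ZMod 5)
  have h : partitionSeries (ZMod 5) ^ 2 =
      partitionSeries (ZMod 5) ^ 5 * pentagonalSeries (ZMod 5) ^ 3 := by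
    rw [show 5 = 2 + 3 from rfl, pow_add, mul_assoc, ← mul_pow, mul_comm (partitionSeries _), hP,
      one_pow, mul_one]
  rw [h]
  have : Fact (Nat.Prime 5) := ⟨Nat.prime_five⟩
  exact coeff_mul_eq_zero_of_modEq (fun i ↦ coeff_pow_eq_zero_of_not_dvd _)
    fun j hj ↦ coeff_pentagonalSeries_pow_three_eq_zero (hj.trans (by simp [Nat.ModEq]))
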